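/- For all r > 2/3, one has ∑_{j=1}^∞ 18r(3j-2)/(3r+3j-2)^3 > 1; equivalently 2r ψ'(r+1/3) + r^2 ψ''(r+1/3) > 1. -/

import Mathlib

/-- Trigamma function, via its series representation. -/
noncomputable def trigamma (x : ℝ) : ℝ := ∑' j : ℕ, 1 / (x + j) ^ 2

/-- Tetragamma function, via its series representation. -/
noncomputable def tetragamma (x : ℝ) : ℝ := -2 * ∑' j : ℕ, 1 / (x + j) ^ 3

private lemma summable_base : Summable (fun j : ℕ => 1 / ((j : ℝ) + 1) ^ 2) := by
  have h : Summable (fun n : ℕ => 1 / (n : ℝ) ^ 2) :=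
    (Real.summable_one_div_nat_pow (p := 2)).mpr one_lt_two
  have h2 := (summable_nat_add_iff (f := fun n : ℕ => 1 / (n : ℝ) ^ 2) 1).mpr h
  simpa [Nat.cast_add] using h2

private lemma summable_shift_sq (x : ℝ) (hx : 1 ≤ x) :
    Summable (fun j : ℕ => 1 / (x + (j : ℝ)) ^ 2) := by
  refine Summable.of_nonneg_of_le (fun j => by positivity) (fun j => ?_) summable_base
  have hj : ((j : ℝ) + 1) ≤ x + j := by linarith [Nat.cast_nonneg (α := ℝ) j]
  have h0 : (0 : ℝ) < (j : ℝ) + 1 := by positivity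
  exact one_div_le_one_div_of_le (by positivity) (by nlinarith)

private lemma summable_shift_cube (x : ℝ) (hx : 1 ≤ x) :
    Summable (fun j : ℕ => 1 / (x + (j : ℝ)) ^ 3) := by
  refine Summable.of_nonneg_of_le (fun j => by positivity) (fun j => ?_) summable_base
  have hj : ((j : ℝ) + 1) ≤ x + j := by linarith [Nat.cast_nonneg (α := ℝ) j]
  have h0 : (0 : ℝ) < (j : ℝ) + 1 := by positivity
  have hx1 : (1 : ℝ) ≤ x + j := by linarith [Nat.cast_nonneg (α := ℝ) j]
  have h2 : ((j : ℝ) + 1) ^ 2 ≤ (x + j) ^ 2 := by nlinarith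
  have h3 : (x + (j : ℝ)) ^ 2 ≤ (x + j) ^ 3 := by nlinarith
  exact one_div_le_one_div_of_le (by positivity) (le_trans h2 h3)

/-- The key telescoping step inequality. -/
private lemma step_aux (r u : ℝ) (hr : 2 / 3 < r) (hu : r + 1 / 3 ≤ u) :
    (2 * r / u + (r - r ^ 2) / u ^ 2 + (r / 3 - r ^ 2) / u ^ 3
        + (-(r ^ 2) / 2 - r / 18) / u ^ 4)
      - (2 * r / (u + 1) + (r - r ^ 2) / (u + 1) ^ 2 + (r / 3 - r ^ 2) / (u + 1) ^ 3
        + (-(r ^ 2) / 2 - r / 18) / (u + 1) ^ 4)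
      ≤ 2 * r * (1 / u ^ 2) - 2 * r ^ 2 * (1 / u ^ 3) := by
  have hu0 : (0 : ℝ) < u := by linarith
  have hu1 : (0 : ℝ) < u + 1 := by linarith
  have hkey : (2 * r * (1 / u ^ 2) - 2 * r ^ 2 * (1 / u ^ 3)) -
      ((2 * r / u + (r - r ^ 2) / u ^ 2 + (r / 3 - r ^ 2) / u ^ 3
          + (-(r ^ 2) / 2 - r / 18) / u ^ 4)
        - (2 * r / (u + 1) + (r - r ^ 2) / (u + 1) ^ 2 + (r / 3 - r ^ 2) / (u + 1) ^ 3
          + (-(r ^ 2) / 2 - r / 18) / (u + 1) ^ 4))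
      = ((2 * r / 9) * u ^ 3 + (r ^ 2 - r / 9) * u + (r ^ 2 / 2 + r / 18))
          / (u ^ 4 * (u + 1) ^ 4) := by
    field_simp
    ring
  have hnum : 0 ≤ (2 * r / 9) * u ^ 3 + (r ^ 2 - r / 9) * u + (r ^ 2 / 2 + r / 18) := by
    have h1 : 0 ≤ r ^ 2 - r / 9 := by nlinarith
    have h3 : 0 ≤ (2 * r / 9) * u ^ 3 := by positivity
    nlinarith
  have hfrac : 0 ≤ ((2 * r / 9) * u ^ 3 + (r ^ 2 - r / 9) * u + (r ^ 2 / 2 + r / 18))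
      / (u ^ 4 * (u + 1) ^ 4) := div_nonneg hnum (by positivity)
  linarith [hkey ▸ hfrac]

theorem Phi_two_thirds_gt_one (r : ℝ) (hr : 2 / 3 < r) :
    (1 < ∑' j : ℕ, 18 * r * (3 * (j + 1 : ℝ) - 2) / (3 * r + 3 * (j + 1 : ℝ) - 2) ^ 3) ∧
      1 < 2 * r * trigamma (r + 1 / 3) + r ^ 2 * tetragamma (r + 1 / 3) := by
  set a : ℝ := r + 1 / 3 with ha_def
  have ha1 : 1 < a := by simp only [ha_def]; linarith
  have hr0 : 0 < r := by linarith
  set T : ℕ → ℝ := fun j => 18 * r * (3 * (j + 1 : ℝ) - 2) / (3 * r + 3 * (j + 1 : ℝ) - 2) ^ 3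
    with hT_def
  have hTeq : ∀ j : ℕ, T j = 2 * r * (1 / (a + j) ^ 2) - 2 * r ^ 2 * (1 / (a + j) ^ 3) := by
    intro j
    have hjn := Nat.cast_nonneg (α := ℝ) j
    have hu : (0 : ℝ) < a + j := by simp only [ha_def]; linarith
    have h3 : 3 * r + 3 * ((j : ℝ) + 1) - 2 = 3 * (a + j) := by simp only [ha_def]; ring
    simp only [hT_def, h3]
    have h1 : (a + (j : ℝ)) ≠ 0 := ne_of_gt hu
    field_simp
    simp only [ha_def]
    ring
  have hs2 := summable_shift_sq a (le_of_lt ha1)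
  have hs3 := summable_shift_cube a (le_of_lt ha1)
  have hT_summable : Summable T := by
    have h : Summable (fun j : ℕ =>
        2 * r * (1 / (a + j) ^ 2) - 2 * r ^ 2 * (1 / (a + j) ^ 3)) :=
      (hs2.mul_left _).sub (hs3.mul_left _)
    exact h.congr (fun j => (hTeq j).symm)
  have hT_nonneg : ∀ n : ℕ, 0 ≤ T n := by
    intro n
    rw [hTeq n]
    have hjn := Nat.cast_nonneg (α := ℝ) n
    have hu0 : (0 : ℝ) < a + n := by simp only [ha_def]; linarith
    have hform : 2 * r * (1 / (a + n) ^ 2) - 2 * r ^ 2 * (1 / (a + n) ^ 3)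
        = 2 * r * ((a + n) - r) / (a + n) ^ 3 := by
      field_simp
    rw [hform]
    have : (0:ℝ) ≤ (a + n) - r := by simp only [ha_def]; linarith
    positivity
  set g : ℕ → ℝ := fun n =>
      2 * r / (a + n) + (r - r ^ 2) / (a + n) ^ 2 + (r / 3 - r ^ 2) / (a + n) ^ 3
        + (-(r ^ 2) / 2 - r / 18) / (a + n) ^ 4 with hg_def
  have hstep : ∀ n : ℕ, g n - g (n + 1) ≤ T n := by
    intro n
    have hjn := Nat.cast_nonneg (α := ℝ) n
    rw [hTeq n]
    simp only [hg_def]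
    push_cast
    rw [show a + ((n : ℝ) + 1) = (a + (n : ℝ)) + 1 by ring]
    exact step_aux r (a + n) hr (by simp only [ha_def]; linarith)
  have hpartial : ∀ n : ℕ, g 0 - g n ≤ ∑' j, T j := by
    intro n
    have htel : ∑ j ∈ Finset.range n, (g j - g (j + 1)) = g 0 - g n :=
      Finset.sum_range_sub' g n
    have h1 : g 0 - g n ≤ ∑ j ∈ Finset.range n, T j := by
      rw [← htel]
      exact Finset.sum_le_sum (fun j _ => hstep j)
    exact le_trans h1 (Summable.sum_le_tsum _ (fun i _ => hT_nonneg i) hT_summable)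
  -- g tends to 0
  have hten : Filter.Tendsto (fun n : ℕ => a + (n : ℝ)) Filter.atTop Filter.atTop :=
    Filter.tendsto_atTop_add_const_left _ a tendsto_natCast_atTop_atTop
  have hpow : ∀ k : ℕ, k ≠ 0 → ∀ c : ℝ,
      Filter.Tendsto (fun n : ℕ => c / (a + (n : ℝ)) ^ k) Filter.atTop (nhds 0) := by
    intro k hk c
    exact Filter.Tendsto.div_atTop tendsto_const_nhds
      ((Filter.tendsto_pow_atTop hk).comp hten)
  have h1t := Filter.Tendsto.div_atTop (tendsto_const_nhds (x := 2 * r)) hten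
  have h2t := hpow 2 (by norm_num) (r - r ^ 2)
  have h3t := hpow 3 (by norm_num) (r / 3 - r ^ 2)
  have h4t := hpow 4 (by norm_num) (-(r ^ 2) / 2 - r / 18)
  have hgt : Filter.Tendsto g Filter.atTop (nhds 0) := by
    have := ((h1t.add h2t).add h3t).add h4t
    simpa [hg_def] using this
  have hg0_le : g 0 ≤ ∑' j, T j := by
    have hlim : Filter.Tendsto (fun n : ℕ => g 0 - g n) Filter.atTop (nhds (g 0)) := by
      have := (tendsto_const_nhds (x := g 0)).sub hgt
      simpa using this
    exact le_of_tendsto hlim (Filter.Eventually.of_forall hpartial)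
  have hg0 : 1 < g 0 := by
    have ha0 : (0 : ℝ) < a := by linarith
    have hmargin : g 0 - 1 = (r ^ 2 / 18 + 5 * r / 54 - 1 / 81) / a ^ 4 := by
      simp only [hg_def, Nat.cast_zero, add_zero]
      field_simp
      simp only [ha_def]
      ring
    have hnum : 0 < r ^ 2 / 18 + 5 * r / 54 - 1 / 81 := by nlinarith
    have hpos : 0 < (r ^ 2 / 18 + 5 * r / 54 - 1 / 81) / a ^ 4 := by positivity
    have h' : 0 < g 0 - 1 := hmargin ▸ hpos
    linarith
  have hmain : 1 < ∑' j, T j := lt_of_lt_of_le hg0 hg0_le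
  constructor
  · exact hmain
  · have heq : ∑' j, T j = 2 * r * trigamma a + r ^ 2 * tetragamma a := by
      have h1 : ∑' j, T j
          = ∑' j : ℕ, (2 * r * (1 / (a + j) ^ 2) - 2 * r ^ 2 * (1 / (a + j) ^ 3)) :=
        tsum_congr hTeq
      rw [h1, Summable.tsum_sub (hs2.mul_left _) (hs3.mul_left _), tsum_mul_left, tsum_mul_left]
      rw [trigamma, tetragamma]
      ring
    linarith [heq ▸ hmain]
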